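/- arXiv:2008.13475 — 10 statements merged into one kernel-verified Lean document; each statement's English description precedes it below -/
import Mathlib

section
/- For all integers m ≥ 2, r ≥ 0, n ≥ 0, and any element z of a commutative ring, ∑_{ν=0}^{r} (-1)^ν C(r,ν) f_{m,n+r-ν}(z) = ∑_{j=0}^{n} C(n,j) z^{C(j+r,m)}. -/
open Finset

private def Faux {R : Type*} [CommRing R] (m : ℕ) (z : R) (N : ℕ) : R :=
  ∑ j ∈ range (N + 1), (N.choose j : R) * z ^ (j.choose m)

-- g_r(n+1) = g_r(n) + g_{r+1}(n)
private lemma sumB {R : Type*} [CommRing R] (m r n : ℕ) (z : R) :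
    ∑ j ∈ range (n + 1 + 1), ((n + 1).choose j : R) * z ^ ((j + r).choose m)
      = (∑ j ∈ range (n + 1), (n.choose j : R) * z ^ ((j + r).choose m))
        + ∑ j ∈ range (n + 1), (n.choose j : R) * z ^ ((j + (r + 1)).choose m) := by
  rw [Finset.sum_range_succ' _ (n + 1)]
  rw [Finset.sum_range_succ' (fun j => (n.choose j : R) * z ^ ((j + r).choose m)) n]
  simp only [Nat.choose_succ_succ, Nat.cast_add, add_mul, Nat.choose_zero_right,
    Nat.cast_one, one_mul, zero_add, Finset.sum_add_distrib]
  have h0 : ∑ j ∈ range (n + 1), (n.choose (j + 1) : R) * z ^ ((j + 1 + r).choose m)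
      = ∑ j ∈ range n, (n.choose (j + 1) : R) * z ^ ((j + 1 + r).choose m) := by
    rw [Finset.sum_range_succ]; simp
  have h1 : ∑ j ∈ range (n + 1), (n.choose j : R) * z ^ ((j + 1 + r).choose m)
      = ∑ j ∈ range (n + 1), (n.choose j : R) * z ^ ((j + (r + 1)).choose m) := by
    apply Finset.sum_congr rfl; intro j _
    rw [show j + 1 + r = j + (r + 1) from by omega]
  rw [h0, h1]; ring

-- difference equation for the LHS
private lemma sumA {R : Type*} [CommRing R] (m r n : ℕ) (z : R) :
    ∑ ν ∈ range (r + 1 + 1), (-1 : R) ^ ν * ((r + 1).choose ν : R) * Faux m z (n + (r + 1) - ν)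
      = (∑ ν ∈ range (r + 1), (-1 : R) ^ ν * (r.choose ν : R) * Faux m z (n + 1 + r - ν))
        - ∑ ν ∈ range (r + 1), (-1 : R) ^ ν * (r.choose ν : R) * Faux m z (n + r - ν) := by
  rw [Finset.sum_range_succ' _ (r + 1)]
  rw [Finset.sum_range_succ' (fun ν => (-1 : R) ^ ν * (r.choose ν : R) * Faux m z (n + 1 + r - ν)) r]
  have hidx : ∀ k, n + (r + 1) - (k + 1) = n + r - k := fun k => by omega
  have hidx2 : ∀ k, n + 1 + r - (k + 1) = n + r - k := fun k => by omega
  simp only [hidx, hidx2, Nat.choose_succ_succ, Nat.cast_add, Nat.choose_zero_right,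
    Nat.cast_one, one_mul, pow_zero, Nat.sub_zero, pow_succ, mul_add, add_mul]
  rw [Finset.sum_add_distrib]
  have h0 : ∑ k ∈ range (r + 1), (-1 : R) ^ k * (-1) * (r.choose (k + 1) : R) * Faux m z (n + r - k)
      = ∑ k ∈ range r, (-1 : R) ^ k * (-1) * (r.choose (k + 1) : R) * Faux m z (n + r - k) := by
    rw [Finset.sum_range_succ]; simp
  have e1 : n + (r + 1) = n + 1 + r := by omega
  have hA : ∑ x ∈ range (r + 1), (-1 : R) ^ x * -1 * (r.choose x : R) * Faux m z (n + r - x)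
      = -∑ ν ∈ range (r + 1), (-1 : R) ^ ν * (r.choose ν : R) * Faux m z (n + r - ν) := by
    rw [← Finset.sum_neg_distrib]
    apply Finset.sum_congr rfl; intros; ring
  simp only [Nat.succ_eq_add_one]
  rw [hA, h0, e1]
  ring

theorem stmt_2 {R : Type*} [CommRing R] (m r n : ℕ) (hm : 2 ≤ m) (z : R) :
    ∑ ν ∈ Finset.range (r + 1), (-1 : R) ^ ν * (r.choose ν : R) *
        (∑ j ∈ Finset.range (n + r - ν + 1), ((n + r - ν).choose j : R) * z ^ (j.choose m))
      = ∑ j ∈ Finset.range (n + 1), (n.choose j : R) * z ^ ((j + r).choose m) := by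
  clear hm
  induction r generalizing n with
  | zero => simp
  | succ r ih =>
    have hA := sumA (R := R) m r n z
    simp only [Faux] at hA
    rw [hA, ih (n + 1), ih n]
    linear_combination sumB (R := R) m r n z
end

section
/- Let m and ν be positive integers with 2^{ν-1} ≤ m < 2^ν. Then for all k ≥ 0, C(m+k+2^ν, m) ≡ C(m+k, m) (mod 2); that is, the sequence of binomial coefficients C(m+k, m) modulo 2 is periodic in k with period 2^ν. -/
/- By Lucas's theorem, adding `p ^ (a + 1)` to `n` keeps its last base-`p` digit and adds `p ^ a`
to `n / p`, while `k / p < p ^ a`; so induction on `a` applies. -/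
theorem Choose.choose_add_prime_pow_modEq {p n k a : ℕ} [Fact p.Prime] (hk : k < p ^ a) :
    (n + p ^ a).choose k ≡ n.choose k [MOD p] := by
  induction a generalizing n k with
  | zero => simp [Nat.lt_one_iff.mp hk, Nat.ModEq.refl]
  | succ a ih =>
    have hp : 0 < p := (Fact.out : p.Prime).pos
    have hshift : n + p ^ (a + 1) = n + p * p ^ a := by rw [pow_succ']
    have hdiv : (n + p ^ (a + 1)) / p = n / p + p ^ a := by
      rw [hshift, Nat.add_mul_div_left _ _ hp]
    have hmod : (n + p ^ (a + 1)) % p = n % p := by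
      rw [hshift, Nat.add_mul_mod_self_left]
    have hkdiv : k / p < p ^ a := Nat.div_lt_of_lt_mul (by rwa [← pow_succ'])
    calc (n + p ^ (a + 1)).choose k
        ≡ (n % p).choose (k % p) * (n / p + p ^ a).choose (k / p) [MOD p] := by
          rw [← hmod, ← hdiv]; exact Choose.choose_modEq_choose_mod_mul_choose_div_nat
      _ ≡ (n % p).choose (k % p) * (n / p).choose (k / p) [MOD p] :=
          (ih hkdiv).mul_left _
      _ ≡ n.choose k [MOD p] := Choose.choose_modEq_choose_mod_mul_choose_div_nat.symm

theorem stmt_3_general (m ν : ℕ) (h2 : m < 2 ^ ν) (k : ℕ) :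
    (m + k + 2 ^ ν).choose m ≡ (m + k).choose m [MOD 2] :=
  Choose.choose_add_prime_pow_modEq h2

theorem stmt_3 (m ν : ℕ) (hm : 0 < m) (hν : 0 < ν)
    (h1 : 2 ^ (ν - 1) ≤ m) (h2 : m < 2 ^ ν) (k : ℕ) :
    (m + k + 2 ^ ν).choose m ≡ (m + k).choose m [MOD 2] :=
  stmt_3_general m ν h2 k
end

section
/- If m is an even positive integer with 2^{ν-1} ≤ m < 2^ν, then there exists an integer k with 2^ν ≤ k < 2^{ν+1} such that C(k,m) and C(k+1,m) are both odd. -/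
lemma odd_choose_of_and_eq_zero : ∀ n a b : ℕ, a + b ≤ n → a &&& b = 0 →
    Odd ((a + b).choose b) := by
  intro n
  induction n with
  | zero =>
    intro a b hn h
    obtain ⟨rfl, rfl⟩ : a = 0 ∧ b = 0 := by omega
    simp
  | succ n ih =>
    intro a b hn h
    rcases Nat.eq_zero_or_pos (a + b) with h0 | hpos
    · rw [h0]
      simp [Nat.eq_zero_of_add_eq_zero_left h0]
    have hbit : a % 2 = 0 ∨ b % 2 = 0 := by
      have h' : (a % 2) &&& (b % 2) = 0 := by
        rw [← Nat.and_one_is_mod, ← Nat.and_one_is_mod]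
        calc (a &&& 1) &&& (b &&& 1) = (a &&& b) &&& 1 := by
              rw [Nat.land_assoc, ← Nat.land_assoc 1 b 1, Nat.land_comm 1 b, Nat.land_assoc, (by rfl : (1 : ℕ) &&& 1 = 1),
                Nat.land_assoc]
          _ = 0 := by rw [h]; rfl
      rcases Nat.mod_two_eq_zero_or_one a with ha | ha <;>
        rcases Nat.mod_two_eq_zero_or_one b with hb | hb <;> simp [ha, hb] at h' ⊢
    have hsum : a % 2 + b % 2 < 2 := by omega
    have hdiv : (a + b) / 2 = a / 2 + b / 2 := by omega
    have hmod : (a + b) % 2 = a % 2 + b % 2 := by omega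
    have hand2 : a / 2 &&& b / 2 = 0 := by
      apply Nat.eq_of_testBit_eq
      intro i
      rw [Nat.testBit_and, Nat.testBit_div_two, Nat.testBit_div_two, ← Nat.testBit_and, h,
        Nat.zero_testBit, Nat.zero_testBit]
    have key : ((a + b) % 2).choose (b % 2) = 1 := by
      rw [hmod]
      rcases hbit with h' | h' <;> simp [h']
    have ihodd : Odd (((a + b) / 2).choose (b / 2)) := by
      rw [hdiv]
      exact ih (a / 2) (b / 2) (by omega) hand2
    have : Fact (Nat.Prime 2) := ⟨Nat.prime_two⟩
    have hmodEq := Choose.choose_modEq_choose_mod_mul_choose_div_nat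
      (n := a + b) (k := b) (p := 2)
    rw [key, one_mul] at hmodEq
    rw [Nat.odd_iff] at ihodd ⊢
    have := hmodEq.symm
    unfold Nat.ModEq at this
    omega

theorem stmt_5 (m ν : ℕ) (hm : 0 < m) (heven : Even m)
    (h1 : 2 ^ (ν - 1) ≤ m) (h2 : m < 2 ^ ν) :
    ∃ k : ℕ, 2 ^ ν ≤ k ∧ k < 2 ^ (ν + 1) ∧ Odd (k.choose m) ∧ Odd ((k + 1).choose m) := by
  have hν : 1 ≤ ν := by
    rcases Nat.eq_zero_or_pos ν with rfl | h
    · simp at h2; omega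
    · exact h
  have hm0 : m % 2 = 0 := Nat.even_iff.mp heven
  have hmbit0 : m.testBit 0 = false := by
    simp [Nat.testBit_zero, hm0]
  have hand : 2 ^ ν &&& m = 0 := by
    apply Nat.eq_of_testBit_eq
    intro i
    rw [Nat.testBit_and, Nat.zero_testBit]
    rcases eq_or_ne ν i with rfl | hne
    · rw [Nat.testBit_lt_two_pow h2, Bool.and_false]
    · rw [Nat.testBit_two_pow_of_ne hne, Bool.false_and]
  have hand1 : (2 ^ ν + 1) &&& m = 0 := by
    apply Nat.eq_of_testBit_eq
    intro i
    rw [Nat.testBit_and, Nat.zero_testBit]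
    rcases lt_trichotomy i ν with hi | rfl | hi
    · rw [Nat.testBit_two_pow_add_gt hi]
      rcases Nat.eq_zero_or_pos i with rfl | hi0
      · rw [hmbit0, Bool.and_false]
      · rw [Nat.testBit_lt_two_pow (by calc 1 < 2 ^ 1 := by norm_num
              _ ≤ 2 ^ i := Nat.pow_le_pow_right (by norm_num) hi0), Bool.false_and]
    · rw [Nat.testBit_lt_two_pow h2, Bool.and_false]
    · rw [Nat.testBit_lt_two_pow (show 2 ^ ν + 1 < 2 ^ i from by
        calc 2 ^ ν + 1 < 2 ^ ν + 2 ^ ν := by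
              have : 2 ≤ 2 ^ ν := by
                calc 2 = 2 ^ 1 := rfl
                  _ ≤ 2 ^ ν := Nat.pow_le_pow_right (by norm_num) hν
              omega
          _ = 2 ^ (ν + 1) := by ring
          _ ≤ 2 ^ i := Nat.pow_le_pow_right (by norm_num) hi), Bool.false_and]
  refine ⟨2 ^ ν + m, Nat.le_add_right _ _, ?_, ?_, ?_⟩
  · have hp : 2 ^ (ν + 1) = 2 ^ ν * 2 := pow_succ 2 ν
    omega
  · exact odd_choose_of_and_eq_zero (2 ^ ν + m) (2 ^ ν) m le_rfl hand
  · have hrw : 2 ^ ν + m + 1 = (2 ^ ν + 1) + m := by ring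
    rw [hrw]
    exact odd_choose_of_and_eq_zero ((2 ^ ν + 1) + m) (2 ^ ν + 1) m le_rfl hand1
end

section
/- If m is an odd integer with m ≥ 1, then for all integers n ≥ 1 and r ≥ 0, the sum ∑_{k=0}^{n} C(n,k) (-1)^{C(k+r,m)} is nonnegative. In particular, the sequence (f_{m,n}(-1))_{n≥1} is absolutely monotonic. -/
/-!
Write `ε j = (-1) ^ C(j, m)`. For odd `m` and even `j`, Lucas' theorem at `p = 2` gives
`C(j, m) ≡ C(0, 1) * C(j / 2, m / 2) = 0 (mod 2)`, so among any two consecutive values of `ε`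
one is `1` and `ε j + ε (j + 1) ≥ 0`. Pascal's rule rewrites the binomial transform of a sequence
at `n + 1` as its transform at `n` applied to the sums of consecutive terms, which are therefore
all nonnegative. Finally the `r`-th forward difference of the binomial transform of `a` is the
binomial transform of the shifted sequence `a (· + r)`, so the second claim reduces to the first.
-/

open Finset fwdDiff

section BinomialTransform

variable {R : Type*} [CommRing R]

def binomialTransform (a : ℕ → R) (n : ℕ) : R :=
  ∑ k ∈ range (n + 1), (n.choose k : R) * a k

theorem binomialTransform_succ (a : ℕ → R) (n : ℕ) :
    binomialTransform a (n + 1) = binomialTransform a n + binomialTransform (fun k ↦ a (k + 1)) n :=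
  sum_choose_succ_mul (fun i _ ↦ a i) n

theorem binomialTransform_succ_eq_add_shift (a : ℕ → R) (n : ℕ) :
    binomialTransform a (n + 1) = binomialTransform (fun k ↦ a k + a (k + 1)) n := by
  rw [binomialTransform_succ]
  simp only [binomialTransform, mul_add, sum_add_distrib]

theorem fwdDiff_binomialTransform (a : ℕ → R) :
    Δ_[1] (binomialTransform a) = binomialTransform (fun k ↦ a (k + 1)) := by
  ext n
  rw [fwdDiff, binomialTransform_succ, add_sub_cancel_left]

theorem fwdDiff_iter_binomialTransform (a : ℕ → R) (r : ℕ) :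
    (Δ_[1])^[r] (binomialTransform a) = binomialTransform (fun k ↦ a (k + r)) := by
  induction r with
  | zero => rfl
  | succ r ih =>
    rw [Function.iterate_succ_apply', ih, fwdDiff_binomialTransform]
    simp only [add_assoc, add_comm 1 r]

end BinomialTransform

theorem binomialTransform_succ_nonneg {R : Type*} [CommRing R] [PartialOrder R]
    [IsOrderedRing R] {a : ℕ → R} (ha : ∀ k, 0 ≤ a k + a (k + 1)) (n : ℕ) :
    0 ≤ binomialTransform a (n + 1) := by
  rw [binomialTransform_succ_eq_add_shift]
  exact sum_nonneg fun k _ ↦ mul_nonneg (Nat.cast_nonneg _) (ha k)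

theorem fwdDiff_iter_one_eq_sum_sub {G : Type*} [AddCommGroup G] (f : ℕ → G) (r n : ℕ) :
    (Δ_[1])^[r] f n = ∑ k ∈ range (r + 1), ((-1 : ℤ) ^ k * r.choose k) • f (n + r - k) := by
  rw [fwdDiff_iter_eq_sum_shift, ← sum_range_reflect]
  refine sum_congr rfl fun k hk ↦ ?_
  have hkr : k ≤ r := Nat.lt_succ_iff.mp (mem_range.mp hk)
  rw [Nat.add_sub_cancel_right, Nat.sub_sub_self hkr, Nat.choose_symm hkr, smul_eq_mul, mul_one,
    Nat.add_sub_assoc hkr]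

theorem even_choose_of_even_of_odd {n k : ℕ} (hn : Even n) (hk : Odd k) : Even (n.choose k) := by
  have : Fact (Nat.Prime 2) := ⟨Nat.prime_two⟩
  have h := Choose.choose_modEq_choose_mod_mul_choose_div_nat (n := n) (k := k) (p := 2)
  rw [Nat.even_iff.mp hn, Nat.odd_iff.mp hk, Nat.choose_zero_succ, zero_mul] at h
  exact Nat.even_iff.mpr h

theorem neg_one_pow_choose_add_neg_one_pow_choose_succ_nonneg {m : ℕ} (hm : Odd m) (j : ℕ) :
    0 ≤ (-1 : ℤ) ^ j.choose m + (-1 : ℤ) ^ (j + 1).choose m := by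
  have bound : ∀ e : ℕ, -1 ≤ (-1 : ℤ) ^ e := fun e ↦ by
    rcases neg_one_pow_eq_or ℤ e with h | h <;> norm_num [h]
  rcases Nat.even_or_odd j with hj | hj
  · rw [(even_choose_of_even_of_odd hj hm).neg_one_pow]
    linarith [bound ((j + 1).choose m)]
  · rw [(even_choose_of_even_of_odd hj.add_one hm).neg_one_pow]
    linarith [bound (j.choose m)]

theorem stmt_7_general (m : ℕ) (hodd : Odd m) :
    (∀ n : ℕ, 1 ≤ n → ∀ r : ℕ,
      0 ≤ ∑ k ∈ Finset.range (n + 1), (n.choose k : ℤ) * (-1 : ℤ) ^ ((k + r).choose m)) ∧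
    (∀ n : ℕ, 1 ≤ n → ∀ r : ℕ,
      0 ≤ ∑ k ∈ Finset.range (r + 1), (-1 : ℤ) ^ k * (r.choose k : ℤ) *
          (∑ j ∈ Finset.range (n + r - k + 1),
            ((n + r - k).choose j : ℤ) * (-1 : ℤ) ^ (j.choose m))) := by
  set ε : ℕ → ℤ := fun j ↦ (-1 : ℤ) ^ j.choose m
  have shifted_nonneg : ∀ n, 1 ≤ n → ∀ r, 0 ≤ binomialTransform (fun k ↦ ε (k + r)) n := by
    intro n hn r
    obtain ⟨n, rfl⟩ := Nat.exists_eq_add_of_le' hn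
    refine binomialTransform_succ_nonneg (fun k ↦ ?_) n
    simpa only [add_right_comm k 1 r] using
      neg_one_pow_choose_add_neg_one_pow_choose_succ_nonneg hodd (k + r)
  refine ⟨shifted_nonneg, fun n hn r ↦ ?_⟩
  have h := shifted_nonneg n hn r
  rwa [← fwdDiff_iter_binomialTransform, fwdDiff_iter_one_eq_sum_sub] at h

theorem stmt_7 (m : ℕ) (hm : 1 ≤ m) (hodd : Odd m) :
    (∀ n : ℕ, 1 ≤ n → ∀ r : ℕ,
      0 ≤ ∑ k ∈ Finset.range (n + 1), (n.choose k : ℤ) * (-1 : ℤ) ^ ((k + r).choose m)) ∧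
    (∀ n : ℕ, 1 ≤ n → ∀ r : ℕ,
      0 ≤ ∑ k ∈ Finset.range (r + 1), (-1 : ℤ) ^ k * (r.choose k : ℤ) *
          (∑ j ∈ Finset.range (n + r - k + 1),
            ((n + r - k).choose j : ℤ) * (-1 : ℤ) ^ (j.choose m))) :=
  stmt_7_general m hodd
end

section
/- Let μ ≥ 1 be an integer and let n = k·2^{μ+1} − 1 for some integer k ≥ 1. Then f_{2^μ, n}(−1) = 0; equivalently, z + 1 divides the polynomial f_{2^μ, n}(z). -/
open Polynomial

/-!
By Lucas' theorem `C(j, 2^μ) ≡ ⌊j / 2^μ⌋ (mod 2)`. When `n + 1 = k·2^(μ+1)`, the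
reflection `j ↦ n - j` turns `⌊j / 2^μ⌋` into `2k - 1 - ⌊j / 2^μ⌋`, so it flips the sign of
`(-1)^C(j, 2^μ)` while fixing `C(n, j)`. Hence the alternating sum equals its own negative.
-/

theorem Nat.choose_prime_pow_modEq_div (p : ℕ) [Fact p.Prime] (μ j : ℕ) :
    j.choose (p ^ μ) ≡ j / p ^ μ [MOD p] := by
  induction μ generalizing j with
  | zero => simp [Nat.ModEq.refl]
  | succ μ ih =>
    calc j.choose (p ^ (μ + 1))
        ≡ (j % p).choose (p ^ (μ + 1) % p) * (j / p).choose (p ^ (μ + 1) / p) [MOD p] :=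
          Choose.choose_modEq_choose_mod_mul_choose_div_nat
      _ = (j / p).choose (p ^ μ) := by
          rw [Nat.pow_succ, Nat.mul_mod_left, Nat.choose_zero_right, one_mul,
            Nat.mul_div_cancel _ (Fact.out : p.Prime).pos]
      _ ≡ j / p ^ (μ + 1) [MOD p] := by
          rw [Nat.pow_succ', ← Nat.div_div_eq_div_mul]
          exact ih _

theorem Nat.sub_one_sub_div_of_lt_mul {m c j : ℕ} (hj : j < c * m) :
    (c * m - 1 - j) / m = c - 1 - j / m := by
  have hm : 0 < m := Nat.pos_of_ne_zero (by rintro rfl; simp at hj)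
  have hq : j / m < c := (Nat.div_lt_iff_lt_mul hm).2 hj
  have hsplit : c * m - 1 - j = (m - 1 - j % m) + (c - 1 - j / m) * m := by
    have h1 := Nat.div_add_mod' j m
    have h2 : (c - 1 - j / m) * m + j / m * m + m = c * m := by
      rw [← Nat.add_mul, ← Nat.succ_mul]; congr 1; omega
    have := Nat.mod_lt j hm
    omega
  rw [hsplit, Nat.add_mul_div_right _ _ hm, Nat.div_eq_of_lt (by omega), zero_add]

theorem Nat.odd_choose_two_pow_sub_one_sub_add_choose {μ k j : ℕ} (hj : j < k * 2 ^ (μ + 1)) :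
    Odd ((k * 2 ^ (μ + 1) - 1 - j).choose (2 ^ μ) + j.choose (2 ^ μ)) := by
  have hN : k * 2 ^ (μ + 1) = 2 * k * 2 ^ μ := by ring
  rw [hN] at hj ⊢
  have hq : j / 2 ^ μ < 2 * k := (Nat.div_lt_iff_lt_mul (by positivity)).2 hj
  have hdiv := Nat.sub_one_sub_div_of_lt_mul hj
  rw [Nat.odd_iff, Nat.add_mod, Nat.choose_prime_pow_modEq_div 2 μ,
    Nat.choose_prime_pow_modEq_div 2 μ j, hdiv, ← Nat.add_mod]
  omega

theorem neg_one_pow_eq_neg_neg_one_pow_of_odd_add {R : Type*} [Monoid R] [HasDistribNeg R]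
    {a b : ℕ} (h : Odd (a + b)) : (-1 : R) ^ a = -(-1) ^ b := by
  calc (-1 : R) ^ a = (-1) ^ (a + b) * (-1) ^ b := by
        rw [pow_add, mul_assoc, ← pow_add, ← two_mul, pow_mul]; simp
    _ = -(-1) ^ b := by rw [h.neg_one_pow, neg_one_mul]

theorem Finset.sum_range_succ_eq_zero_of_reflect_neg {M : Type*} [AddCommGroup M]
    [IsAddTorsionFree M] {n : ℕ} (f : ℕ → M) (hf : ∀ j ≤ n, f (n - j) = -f j) :
    ∑ j ∈ Finset.range (n + 1), f j = 0 := by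
  set S := ∑ j ∈ Finset.range (n + 1), f j
  have hneg : S = -S :=
    calc S = ∑ j ∈ Finset.range (n + 1), f (n - j) := by
          simpa using (Finset.sum_range_reflect f (n + 1)).symm
      _ = -S := by
          rw [← Finset.sum_neg_distrib]
          exact Finset.sum_congr rfl fun j hj => hf j (Nat.lt_succ_iff.1 (Finset.mem_range.1 hj))
  have h2 : 2 • S = 0 := by rw [two_nsmul]; nth_rewrite 2 [hneg]; exact add_neg_cancel S
  simpa using h2

theorem stmt_12_general (μ k : ℕ) (hk : 1 ≤ k) (n : ℕ)
    (hn : n = k * 2 ^ (μ + 1) - 1) :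
    (∑ j ∈ Finset.range (n + 1), (n.choose j : ℤ) * (-1 : ℤ) ^ (j.choose (2 ^ μ))) = 0 ∧
    (Polynomial.X + 1 : ℤ[X]) ∣
      ∑ j ∈ Finset.range (n + 1),
        Polynomial.C ((n.choose j : ℤ)) * Polynomial.X ^ (j.choose (2 ^ μ)) := by
  have hsum :
      ∑ j ∈ Finset.range (n + 1), (n.choose j : ℤ) * (-1 : ℤ) ^ (j.choose (2 ^ μ)) = 0 := by
    refine Finset.sum_range_succ_eq_zero_of_reflect_neg _ fun j hj => ?_
    have hpos : 0 < k * 2 ^ (μ + 1) := by positivity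
    have hj' : j < k * 2 ^ (μ + 1) := by omega
    rw [Nat.choose_symm hj, show n - j = k * 2 ^ (μ + 1) - 1 - j by omega,
      neg_one_pow_eq_neg_neg_one_pow_of_odd_add (Nat.odd_choose_two_pow_sub_one_sub_add_choose hj'),
      mul_neg]
  refine ⟨hsum, ?_⟩
  rw [show (X + 1 : ℤ[X]) = X - C (-1) by simp, dvd_iff_isRoot]
  simpa [IsRoot, eval_finsetSum] using hsum

theorem stmt_12 (μ k : ℕ) (hμ : 1 ≤ μ) (hk : 1 ≤ k) (n : ℕ)
    (hn : n = k * 2 ^ (μ + 1) - 1) :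
    (∑ j ∈ Finset.range (n + 1), (n.choose j : ℤ) * (-1 : ℤ) ^ (j.choose (2 ^ μ))) = 0 ∧
    (Polynomial.X + 1 : ℤ[X]) ∣
      ∑ j ∈ Finset.range (n + 1),
        Polynomial.C ((n.choose j : ℤ)) * Polynomial.X ^ (j.choose (2 ^ μ)) :=
  stmt_12_general μ k hk n hn
end

section
/- Let μ ≥ 1 be a fixed integer, and suppose the integer k ≥ 1 is not divisible by any odd prime p < 2^μ. Then the polynomial z^k + 1 divides f_{2^μ, (k+1)2^μ − 1}(z) in ℤ[z]. -/
/-!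
Write `m = 2 ^ μ` and `n = (k + 1) m - 1`. Since `n + 1` is even, the terms of the sum pair off as
`j ↔ n - j` with equal coefficients `C(n, j)`, and `z ^ k + 1 ∣ z ^ a + z ^ b` as soon as
`a ≡ b + k (mod 2k)`. So it suffices that `C(n - j, m) ≡ C(j, m) + k (mod 2k)`.
As integer-valued polynomials, `C(m - 1 - y, m) = C(y, m)` for even `m`, so with `y = m - 1 - j`
this is `C(km + y, m) ≡ C(y, m) + k`. By Vandermonde, `C(km + y, m) - C(y, m)` is the sum of the
`C(km, i) C(y, m - i)` with `0 < i ≤ m`. For `0 < i < m`, `i C(km, i) = km C(km - 1, i - 1)`, and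
`i` has fewer than `μ` factors `2` and no odd prime factor in common with `k`, so `2k ∣ C(km, i)`.
Finally `C(km, m) = k C(km - 1, m - 1)`, and `C(km - 1, m - 1)` is odd by Lucas' theorem.
-/

open Polynomial Finset

theorem pow_add_one_dvd_pow_add_pow {R : Type*} [CommRing R] (x : R) {k a b : ℕ} (hk : 0 < k)
    (hba : b ≤ a) (h : (a : ℤ) ≡ b + k [ZMOD 2 * k]) : x ^ k + 1 ∣ x ^ a + x ^ b := by
  obtain ⟨s, hs⟩ := Int.modEq_iff_dvd.mp h.symm
  have hs₀ : 0 ≤ s := by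
    have hba' : (b : ℤ) ≤ a := by exact_mod_cast hba
    have hk' : (0 : ℤ) < k := by exact_mod_cast hk
    by_contra! hneg
    nlinarith
  lift s to ℕ using hs₀
  have ha : a = b + k * (2 * s + 1) := by
    have : (a : ℤ) = b + k * (2 * s + 1) := by linear_combination hs
    exact_mod_cast this
  have hodd : x ^ k + 1 ∣ (x ^ k) ^ (2 * s + 1) + 1 := by
    simpa using Odd.add_dvd_pow_add_pow (x ^ k) 1 (odd_two_mul_add_one s)
  rw [ha, pow_add, pow_mul, ← mul_add_one]
  exact hodd.mul_left _

theorem Finset.sum_range_add_self_eq_sum_add_reflect {M : Type*} [AddCommMonoid M]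
    (f : ℕ → M) (h : ℕ) :
    ∑ j ∈ range (h + h), f j = ∑ j ∈ range h, (f j + f (h + h - 1 - j)) := by
  rw [sum_range_add, sum_add_distrib, ← sum_range_reflect (fun j => f (h + j))]
  refine congrArg _ (sum_congr rfl fun j hj => ?_)
  rw [mem_range] at hj
  rw [show h + (h - 1 - j) = h + h - 1 - j by omega]

theorem Ring.choose_natCast_sub_one_sub_of_even {R : Type*} [Ring R] [BinomialRing R]
    {n : ℕ} (hn : Even n) (r : R) : Ring.choose ((n : R) - 1 - r) n = Ring.choose r n := by
  rw [show (n : R) - 1 - r = -(r + 1 - n) by abel, Ring.choose_neg,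
    Int.negOnePow_even _ (by exact_mod_cast hn), one_smul]
  congr 1
  abel

theorem Nat.odd_choose_mul_two_pow_sub_one {k : ℕ} (hk : 0 < k) (μ : ℕ) :
    Odd ((k * 2 ^ μ - 1).choose (2 ^ μ - 1)) := by
  induction μ with
  | zero => simp
  | succ μ ih =>
    have hpos : 0 < k * 2 ^ μ := by positivity
    have hlucas := Choose.choose_modEq_choose_mod_mul_choose_div_nat (p := 2)
      (n := k * 2 ^ (μ + 1) - 1) (k := 2 ^ (μ + 1) - 1)
    have h1 : (k * 2 ^ (μ + 1) - 1) % 2 = 1 := by rw [pow_succ, ← mul_assoc]; omega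
    have h2 : (2 ^ (μ + 1) - 1) % 2 = 1 := by
      have := Nat.one_le_two_pow (n := μ); rw [pow_succ]; omega
    have h3 : (k * 2 ^ (μ + 1) - 1) / 2 = k * 2 ^ μ - 1 := by rw [pow_succ, ← mul_assoc]; omega
    have h4 : (2 ^ (μ + 1) - 1) / 2 = 2 ^ μ - 1 := by
      have := Nat.one_le_two_pow (n := μ); rw [pow_succ]; omega
    rw [h1, h2, h3, h4, Nat.choose_self, one_mul] at hlucas
    rw [Nat.odd_iff, hlucas, ← Nat.odd_iff]
    exact ih

theorem Int.choose_mul_two_pow_modEq {k : ℕ} (hk : 0 < k) (μ : ℕ) :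
    ((k * 2 ^ μ).choose (2 ^ μ) : ℤ) ≡ k [ZMOD 2 * k] := by
  obtain ⟨t, ht⟩ := Nat.odd_choose_mul_two_pow_sub_one hk μ
  have hsucc := Nat.add_one_mul_choose_eq (k * 2 ^ μ - 1) (2 ^ μ - 1)
  have hm : 2 ^ μ - 1 + 1 = 2 ^ μ := Nat.sub_add_cancel Nat.one_le_two_pow
  have hkm : k * 2 ^ μ - 1 + 1 = k * 2 ^ μ := Nat.sub_add_cancel (Nat.mul_pos hk (by positivity))
  rw [hm, hkm, ht] at hsucc
  have hchoose : (k * 2 ^ μ).choose (2 ^ μ) = k * (2 * t + 1) :=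
    Nat.eq_of_mul_eq_mul_right (by positivity : 0 < 2 ^ μ) (by rw [← hsucc]; ring)
  rw [hchoose, Int.modEq_iff_dvd]
  exact ⟨-t, by push_cast; ring⟩

theorem Nat.two_mul_dvd_choose_mul_two_pow {k μ i : ℕ} (hk : 0 < k)
    (hkp : ∀ p : ℕ, p.Prime → Odd p → p < 2 ^ μ → ¬ p ∣ k) (hi₀ : 0 < i) (hi : i < 2 ^ μ) :
    2 * k ∣ (k * 2 ^ μ).choose i := by
  obtain ⟨a, w, hw, rfl⟩ := Nat.exists_eq_two_pow_mul_odd hi₀.ne'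
  have hw₀ : 0 < w := hw.pos
  have hwi : w ≤ 2 ^ a * w := Nat.le_mul_of_pos_left w (by positivity)
  have ha : a < μ := by
    have : 2 ^ a < 2 ^ μ := lt_of_le_of_lt (Nat.le_mul_of_pos_right _ hw₀) hi
    exact (Nat.pow_lt_pow_iff_right (by norm_num)).mp this
  -- the odd part of `i` is made of primes below `2 ^ μ`, none of which divides `k`
  have hcop : Nat.Coprime (k * 2 ^ μ) w := by
    refine Nat.Coprime.symm (Nat.Coprime.mul_right (Nat.coprime_of_dvd fun p hp hpw hpk => ?_) ?_)
    · exact hkp p hp (hw.of_dvd_nat hpw) (by have := Nat.le_of_dvd hw₀ hpw; omega) hpk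
    · exact Nat.Coprime.pow_right _ (hw.coprime_two_right)
  have hid := Nat.add_one_mul_choose_eq (k * 2 ^ μ - 1) (2 ^ a * w - 1)
  rw [Nat.sub_add_cancel (Nat.mul_pos hk (by positivity)), Nat.sub_add_cancel hi₀] at hid
  have h₁ : k * 2 ^ μ ∣ (k * 2 ^ μ).choose (2 ^ a * w) * 2 ^ a :=
    hcop.dvd_of_dvd_mul_right ⟨_, by rw [mul_assoc, ← hid]⟩
  have h₂ : 2 * k * 2 ^ a ∣ k * 2 ^ μ := by
    obtain ⟨d, hd⟩ : ∃ d, μ = a + 1 + d := ⟨μ - a - 1, by omega⟩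
    exact ⟨2 ^ d, by rw [hd, pow_add, pow_succ]; ring⟩
  exact Nat.dvd_of_mul_dvd_mul_right (by positivity) (h₂.trans h₁)

theorem Ring.choose_mul_two_pow_add_modEq {k μ : ℕ} (hk : 0 < k)
    (hkp : ∀ p : ℕ, p.Prime → Odd p → p < 2 ^ μ → ¬ p ∣ k) (y : ℤ) :
    Ring.choose (((k * 2 ^ μ : ℕ) : ℤ) + y) (2 ^ μ) ≡ Ring.choose y (2 ^ μ) + k [ZMOD 2 * k] := by
  set m := 2 ^ μ
  have hm₀ : m ≠ 0 := by positivity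
  have htop : (m, 0) ∈ antidiagonal m := by simp
  have hbot : (0, m) ∈ (antidiagonal m).erase (m, 0) := by simp [hm₀]
  rw [Ring.add_choose_eq _ (Commute.all _ _), ← add_sum_erase _ _ htop, ← add_sum_erase _ _ hbot]
  have hmid : ∑ ij ∈ ((antidiagonal m).erase (m, 0)).erase (0, m),
      Ring.choose ((k * m : ℕ) : ℤ) ij.1 * Ring.choose y ij.2 ≡ 0 [ZMOD 2 * k] := by
    refine Int.modEq_zero_iff_dvd.mpr (dvd_sum fun ij hij => Dvd.dvd.mul_right ?_ _)
    obtain ⟨i, j⟩ := ij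
    obtain ⟨h0m, hm0, hij⟩ : (i = 0 → j ≠ m) ∧ (i = m → j ≠ 0) ∧ i + j = m := by simpa using hij
    rw [Ring.choose_natCast]
    exact Int.natCast_dvd_natCast.mpr
      (Nat.two_mul_dvd_choose_mul_two_pow hk hkp (by omega) (by omega))
  have := (Int.choose_mul_two_pow_modEq hk μ).add ((Int.ModEq.refl (Ring.choose y m)).add hmid)
  simp only [Ring.choose_natCast, Ring.choose_zero_right] at this ⊢
  convert this using 1 <;> ring

theorem Int.choose_sub_modEq_choose_add {k μ : ℕ} (hμ : 1 ≤ μ) (hk : 0 < k)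
    (hkp : ∀ p : ℕ, p.Prime → Odd p → p < 2 ^ μ → ¬ p ∣ k) {j : ℕ}
    (hj : j ≤ (k + 1) * 2 ^ μ - 1) :
    (((k + 1) * 2 ^ μ - 1 - j).choose (2 ^ μ) : ℤ) ≡ j.choose (2 ^ μ) + k [ZMOD 2 * k] := by
  have hcast : (((k + 1) * 2 ^ μ - 1 - j : ℕ) : ℤ) =
      ((k * 2 ^ μ : ℕ) : ℤ) + ((2 ^ μ : ℕ) - 1 - j) := by
    rw [Nat.cast_sub hj, Nat.cast_sub (Nat.mul_pos (Nat.succ_pos k) (by positivity))]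
    push_cast
    ring
  have heven : Even (2 ^ μ) := (Nat.even_pow' (by omega)).mpr even_two
  rw [← Ring.choose_natCast, hcast, ← Ring.choose_natCast,
    ← Ring.choose_natCast_sub_one_sub_of_even heven (j : ℤ)]
  exact Ring.choose_mul_two_pow_add_modEq hk hkp _

theorem stmt_13 (μ k : ℕ) (hμ : 1 ≤ μ) (hk : 1 ≤ k)
    (hkp : ∀ p : ℕ, p.Prime → Odd p → p < 2 ^ μ → ¬ p ∣ k) :
    (Polynomial.X ^ k + 1 : ℤ[X]) ∣
      ∑ j ∈ Finset.range ((k + 1) * 2 ^ μ - 1 + 1),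
        Polynomial.C ((((k + 1) * 2 ^ μ - 1).choose j : ℤ)) * Polynomial.X ^ (j.choose (2 ^ μ)) := by
  set n := (k + 1) * 2 ^ μ - 1
  obtain ⟨h, hh⟩ : Even (n + 1) := by
    rw [Nat.sub_add_cancel (Nat.mul_pos (Nat.succ_pos k) (by positivity))]
    exact ((Nat.even_pow' (by omega)).mpr even_two).mul_left _
  rw [hh, sum_range_add_self_eq_sum_add_reflect]
  refine dvd_sum fun j hj => ?_
  have hjn : j ≤ n - j := by rw [mem_range] at hj; omega
  rw [show h + h - 1 - j = n - j by omega, Nat.choose_symm (by omega), ← mul_add,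
    add_comm (X ^ j.choose (2 ^ μ))]
  exact (pow_add_one_dvd_pow_add_pow X hk (Nat.choose_le_choose _ hjn)
    (Int.choose_sub_modEq_choose_add hμ hk hkp (by omega))).mul_left _
end

section
/- Let m ≥ 2 and n ≥ m+1 be integers with (m,n) ≠ (m,m). Then any rational root of the polynomial f_{m,n}(z) must equal −1. Together with the case n = m, the only possible rational roots of f_{m,n}(z) for n ≥ 1 are −1 and 1 − 2^m (the latter only when n = m). -/
open Polynomial

-- C(N,k) ≥ N for 1 ≤ k < N
lemma aux_choose_ge : ∀ (N k : ℕ), 1 ≤ k → k < N → N ≤ N.choose k := by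
  intro N
  induction N with
  | zero => intro k h1 h2; omega
  | succ N ih =>
    intro k h1 h2
    rcases Nat.eq_or_lt_of_le h1 with h | h
    · rw [← h, Nat.choose_one_right]
    rcases eq_or_lt_of_le (Nat.lt_succ_iff.mp h2) with h' | h'
    · subst h'
      rw [Nat.choose_succ_self_right]
    · obtain ⟨k', rfl⟩ : ∃ k', k = k' + 1 := ⟨k - 1, by omega⟩
      rw [Nat.choose_succ_succ]
      have h3 := ih k' (by omega) (by omega)
      have h4 := ih (k' + 1) (by omega) h'
      simp only [Nat.succ_eq_add_one] at *
      omega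

lemma aux_pow23 : ∀ (n : ℕ), 3 ≤ n → 2 ^ n ≤ 3 ^ (n - 1) := by
  intro n
  induction n with
  | zero => omega
  | succ n ih =>
    intro h
    rcases eq_or_lt_of_le h with h' | h'
    · obtain rfl : n = 2 := by omega
      norm_num
    · have h3 : 3 ≤ n := by omega
      have := ih h3
      have : 2 ^ (n + 1) ≤ 3 ^ (n - 1) * 2 := by
        rw [pow_succ]; omega
      calc 2 ^ (n + 1) ≤ 3 ^ (n - 1) * 3 := by omega
        _ = 3 ^ (n - 1 + 1) := (pow_succ 3 (n-1)).symm
        _ = 3 ^ (n + 1 - 1) := by congr 1; omega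

theorem stmt_14 (m n : ℕ) (hm : 2 ≤ m) (hn : 1 ≤ n) (q : ℚ)
    (hq : Polynomial.eval q
      (∑ j ∈ Finset.range (n + 1),
        Polynomial.C ((n.choose j : ℚ)) * Polynomial.X ^ (j.choose m)) = 0) :
    (m + 1 ≤ n → q = -1) ∧ (q = -1 ∨ (n = m ∧ q = 1 - 2 ^ m)) := by
  simp only [Polynomial.eval_finset_sum, Polynomial.eval_mul, Polynomial.eval_C,
    Polynomial.eval_pow, Polynomial.eval_X] at hq
  rcases lt_trichotomy n m with h | h | h
  · -- n < m : impossible, eval = 2^n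
    exfalso
    have he : ∑ j ∈ Finset.range (n + 1), ((n.choose j : ℚ)) * q ^ (j.choose m)
        = ∑ j ∈ Finset.range (n + 1), ((n.choose j : ℚ)) := by
      refine Finset.sum_congr rfl fun j hj => ?_
      have : j.choose m = 0 := Nat.choose_eq_zero_of_lt (by
        have := Finset.mem_range.mp hj; omega)
      rw [this, pow_zero, mul_one]
    rw [he] at hq
    have : ((2 ^ n : ℕ) : ℚ) = 0 := by
      rw [← Nat.sum_range_choose]; push_cast; exact hq
    simp at this
  · -- n = m
    subst h
    rw [Finset.sum_range_succ, Nat.choose_self] at hq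
    have he : ∑ j ∈ Finset.range n, ((n.choose j : ℚ)) * q ^ (j.choose n)
        = ((2 ^ n - 1 : ℕ) : ℚ) := by
      have h1 : ∑ j ∈ Finset.range n, ((n.choose j : ℚ)) * q ^ (j.choose n)
          = ∑ j ∈ Finset.range n, ((n.choose j : ℚ)) := by
        refine Finset.sum_congr rfl fun j hj => ?_
        have : j.choose n = 0 := Nat.choose_eq_zero_of_lt (Finset.mem_range.mp hj)
        rw [this, pow_zero, mul_one]
      rw [h1, ← Nat.cast_sum]
      congr 1
      have := Nat.sum_range_choose n
      rw [Finset.sum_range_succ, Nat.choose_self] at this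
      have h2 : 1 ≤ 2 ^ n := Nat.one_le_two_pow
      omega
    rw [he] at hq
    simp only [pow_one, Nat.cast_one, one_mul] at hq
    have hq' : q = 1 - 2 ^ n := by
      have h2 : ((2:ℕ):ℚ) ^ n - 1 + q = 0 := by
        push_cast at hq ⊢
        rw [Nat.cast_sub (Nat.one_le_two_pow)] at hq
        push_cast at hq
        linarith [hq]
      push_cast at h2
      linarith
    exact ⟨fun hc => absurd hc (by omega), Or.inr ⟨rfl, hq'⟩⟩
  · -- m < n : main case
    have hq1 : q = -1 := by
      have hmn : m ≤ n := le_of_lt h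
      set D := n.choose m with hD
      set R : Polynomial ℤ := ∑ j ∈ Finset.range n,
        Polynomial.C ((n.choose j : ℤ)) * Polynomial.X ^ (j.choose m) with hR
      set Q : Polynomial ℤ := R + Polynomial.X ^ D with hQdef
      have hQsum : Q = ∑ j ∈ Finset.range (n+1),
          Polynomial.C ((n.choose j : ℤ)) * Polynomial.X ^ (j.choose m) := by
        rw [Finset.sum_range_succ, Nat.choose_self, ← hR]
        simp [hQdef, hD]
      have hDpos : 1 ≤ D := Nat.choose_pos hmn
      have hlt : ∀ j, j < n → j.choose m < D := by
        intro j hj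
        have h1 : j.choose m ≤ (n-1).choose m := Nat.choose_le_choose m (by omega)
        have h2 : (n-1).choose m < n.choose m := by
          obtain ⟨n', rfl⟩ : ∃ n', n = n' + 1 := ⟨n-1, by omega⟩
          obtain ⟨m', rfl⟩ : ∃ m', m = m' + 1 := ⟨m-1, by omega⟩
          simp only [Nat.add_sub_cancel, Nat.choose_succ_succ, Nat.succ_eq_add_one]
          have h3 : 0 < n'.choose m' := Nat.choose_pos (by omega)
          omega
        omega
      have hmonic : Q.Monic := by
        rw [hQdef, add_comm]
        apply Polynomial.monic_X_pow_add
        rw [hR]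
        apply lt_of_le_of_lt (Polynomial.degree_sum_le _ _)
        rw [Finset.sup_lt_iff (by exact_mod_cast WithBot.bot_lt_coe D)]
        intro j hj
        refine lt_of_le_of_lt (Polynomial.degree_C_mul_X_pow_le _ _) ?_
        exact_mod_cast hlt j (Finset.mem_range.mp hj)
      have haeval : Polynomial.aeval q Q = 0 := by
        rw [hQsum, map_sum]
        simpa using hq
      have hint : IsIntegral ℤ q := ⟨Q, hmonic, haeval⟩
      obtain ⟨z, hz⟩ := IsIntegrallyClosed.isIntegral_iff.mp hint
      have hzq : (z : ℚ) = q := by rw [← hz]; simp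
      have hevalz : Q.eval z = 0 := by
        have h5 := Polynomial.aeval_algebraMap_apply_eq_algebraMap_eval (A := ℚ) z Q
        rw [hz, haeval] at h5
        simp only [algebraMap_int_eq, eq_intCast] at h5
        exact_mod_cast h5.symm
      have hS : ∑ j ∈ Finset.range (n+1), ((n.choose j : ℤ)) * z ^ (j.choose m) = 0 := by
        rw [hQsum] at hevalz
        simpa [Polynomial.eval_finset_sum] using hevalz
      have hneg : z ≤ -1 := by
        by_contra hc
        push_neg at hc
        have h0 : (0:ℤ) ≤ z := by omega
        have hterm : ∀ j ∈ Finset.range (n+1), 0 ≤ ((n.choose j : ℤ)) * z ^ (j.choose m) :=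
          fun j _ => mul_nonneg (by positivity) (pow_nonneg h0 _)
        have h1 := Finset.single_le_sum hterm (Finset.mem_range.mpr (by omega : 0 < n + 1))
        rw [hS] at h1
        rw [Nat.choose_eq_zero_of_lt (by omega : 0 < m)] at h1
        simp at h1
      rcases eq_or_lt_of_le hneg with hz1 | hz2
      · rw [← hzq, hz1]; norm_num
      · exfalso
        have hz2' : z ≤ -2 := by omega
        have heval1 : Q.eval 1 = 2 ^ n := by
          rw [hQsum]
          simp only [Polynomial.eval_finset_sum, Polynomial.eval_mul, Polynomial.eval_C,
            Polynomial.eval_pow, Polynomial.eval_X, one_pow, mul_one]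
          have h7 := Nat.sum_range_choose n
          exact_mod_cast congrArg (Nat.cast : ℕ → ℤ) h7
        have hdvd : (1 - z) ∣ (2:ℤ) ^ n := by
          have h8 := Polynomial.sub_dvd_eval_sub 1 z Q
          rwa [heval1, hevalz, sub_zero] at h8
        rcases eq_or_lt_of_le hz2' with hz3 | hz3
        · rw [hz3] at hdvd
          norm_num at hdvd
          have h9 : (3:ℕ) ∣ 2 ^ n := by exact_mod_cast hdvd
          have := Nat.Prime.dvd_of_dvd_pow (p := 3) (by norm_num) h9
          omega
        · set t : ℤ := -z with ht
          have ht3 : 3 ≤ t := by omega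
          set E := (n-1).choose m with hE
          set G := (n-1).choose (m-1) with hG
          rw [Finset.sum_range_succ, Nat.choose_self] at hS
          have hzD : z ^ D = - ∑ j ∈ Finset.range n, ((n.choose j : ℤ)) * z ^ (j.choose m) := by
            push_cast at hS
            linarith [hS]
          have h1 : t ^ D = |z ^ D| := by
            rw [abs_pow, abs_of_nonpos (by omega : z ≤ 0)]
          have h2 : |∑ j ∈ Finset.range n, ((n.choose j : ℤ)) * z ^ (j.choose m)|
              ≤ ∑ j ∈ Finset.range n, ((n.choose j : ℤ)) * t ^ E := by
            refine le_trans (Finset.abs_sum_le_sum_abs _ _) (Finset.sum_le_sum fun j hj => ?_)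
            rw [abs_mul, abs_pow, abs_of_nonpos (by omega : z ≤ 0),
              abs_of_nonneg (by positivity : (0:ℤ) ≤ (n.choose j : ℤ))]
            refine mul_le_mul_of_nonneg_left ?_ (by positivity)
            exact pow_le_pow_right₀ (by omega) (Nat.choose_le_choose m (by
              have := Finset.mem_range.mp hj; omega))
          have hsumn : ∑ j ∈ Finset.range n, ((n.choose j : ℤ)) = 2 ^ n - 1 := by
            have h7 := Nat.sum_range_choose n
            rw [Finset.sum_range_succ, Nat.choose_self] at h7
            have hh : ∑ j ∈ Finset.range n, n.choose j = 2 ^ n - 1 := by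
              have := Nat.one_le_two_pow (n := n)
              omega
            calc (∑ j ∈ Finset.range n, ((n.choose j : ℤ)))
                = ((∑ j ∈ Finset.range n, n.choose j : ℕ) : ℤ) := by push_cast; rfl
              _ = ((2^n - 1 : ℕ) : ℤ) := by rw [hh]
              _ = 2^n - 1 := by
                  rw [Nat.cast_sub Nat.one_le_two_pow]; push_cast; ring
          have key : t ^ D ≤ (2^n - 1) * t ^ E := by
            rw [h1, hzD, abs_neg]
            calc |∑ j ∈ Finset.range n, ((n.choose j : ℤ)) * z ^ (j.choose m)|
                ≤ ∑ j ∈ Finset.range n, ((n.choose j : ℤ)) * t ^ E := h2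
              _ = (∑ j ∈ Finset.range n, ((n.choose j : ℤ))) * t ^ E := by
                  rw [Finset.sum_mul]
              _ = (2^n - 1) * t ^ E := by rw [hsumn]
          have hGge : (n-1) ≤ G := aux_choose_ge (n-1) (m-1) (by omega) (by omega)
          have hpas : D = G + E := by
            rw [hD, hE, hG]
            obtain ⟨n', rfl⟩ : ∃ n', n = n' + 1 := ⟨n-1, by omega⟩
            obtain ⟨m', rfl⟩ : ∃ m', m = m' + 1 := ⟨m-1, by omega⟩
            simp only [Nat.add_sub_cancel]
            rw [Nat.choose_succ_succ]
          have hcontra : (2:ℤ)^n - 1 < t ^ G := by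
            have c1 : (2:ℤ)^n ≤ 3 ^ (n-1) := by exact_mod_cast aux_pow23 n (by omega)
            have c2 : (3:ℤ) ^ (n-1) ≤ 3 ^ G := pow_le_pow_right₀ (by norm_num) hGge
            have c3 : (3:ℤ) ^ G ≤ t ^ G := pow_le_pow_left₀ (by norm_num) ht3 G
            linarith
          have hEpos : (0:ℤ) < t ^ E := pow_pos (by omega) E
          have hfin : (2^n - 1) * t ^ E < t ^ G * t ^ E :=
            mul_lt_mul_of_pos_right hcontra hEpos
          rw [hpas, pow_add] at key
          linarith
    exact ⟨fun _ => hq1, Or.inl hq1⟩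
end

section
/- For all integers n ≥ 0, f_{2,n}(−1) = (√2)^{n+1} · sin((n+1)π/4), where f_{2,n}(z) = ∑_{j=0}^{n} C(n,j) z^{j(j−1)/2}. -/
open Real

lemma eps_period (j : ℕ) : ((-1:ℝ)) ^ ((j+1+1).choose 2) = -((-1:ℝ))^(j.choose 2) := by
  have h : (j+1+1).choose 2 = j.choose 2 + (2*j+1) := by
    simp [Nat.choose_succ_succ, Nat.choose_one_right]
    omega
  have hodd : Odd (2*j+1) := ⟨j, by ring⟩
  rw [h, pow_add, hodd.neg_one_pow]
  ring

lemma pascal_sum (f : ℕ → ℝ) (n : ℕ) :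
    ∑ j ∈ Finset.range (n+2), ((n+1).choose j : ℝ) * f j
      = ∑ j ∈ Finset.range (n+1), (n.choose j : ℝ) * f j
        + ∑ j ∈ Finset.range (n+1), (n.choose j : ℝ) * f (j+1) := by
  rw [Finset.sum_range_succ' (fun j => ((n+1).choose j : ℝ) * f j) (n+1)]
  have h1 : ∀ i, ((n+1).choose (i+1) : ℝ) * f (i+1)
      = (n.choose i : ℝ) * f (i+1) + (n.choose (i+1) : ℝ) * f (i+1) := by
    intro i
    rw [Nat.choose_succ_succ]
    push_cast
    ring
  simp only [h1, Finset.sum_add_distrib]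
  have h2 : ∑ i ∈ Finset.range (n+1), (n.choose (i+1) : ℝ) * f (i+1)
      = ∑ i ∈ Finset.range n, (n.choose (i+1) : ℝ) * f (i+1) := by
    rw [Finset.sum_range_succ, Nat.choose_succ_self]
    simp
  rw [h2, Finset.sum_range_succ' (fun j => ((n.choose j : ℝ)) * f j) n]
  simp [Nat.choose_zero_right]
  ring

lemma aux17 (n : ℕ) :
    (∑ j ∈ Finset.range (n+1), (n.choose j : ℝ) * (-1:ℝ)^(j.choose 2))
        = (Real.sqrt 2) ^ (n + 1) * Real.sin ((n + 1) * Real.pi / 4)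
    ∧ (∑ j ∈ Finset.range (n+1), (n.choose j : ℝ) * (-1:ℝ)^((j+1).choose 2))
        = (Real.sqrt 2) ^ (n + 1) * Real.cos ((n + 1) * Real.pi / 4) := by
  have h2 : Real.sqrt 2 * Real.sqrt 2 = 2 := Real.mul_self_sqrt (by norm_num)
  induction n with
  | zero =>
    constructor <;> simp [Real.sin_pi_div_four, Real.cos_pi_div_four] <;>
      nlinarith [Real.sq_sqrt (by norm_num : (2:ℝ) ≥ 0), Real.sqrt_nonneg 2]
  | succ n ih =>
    obtain ⟨hS, hT⟩ := ih
    set θ : ℝ := ((n:ℝ) + 1) * Real.pi / 4 with hθ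
    have hang : ((n+1:ℕ) + 1 : ℝ) * Real.pi / 4 = θ + Real.pi / 4 := by
      push_cast [hθ]; ring
    constructor
    · rw [show n + 1 + 1 = n + 2 from rfl,
        pascal_sum (fun j => (-1:ℝ)^(j.choose 2)) n]
      rw [hS, hT, hang, Real.sin_add, Real.sin_pi_div_four, Real.cos_pi_div_four]
      rw [pow_succ (Real.sqrt 2) (n+1)]
      linear_combination (-(Real.sqrt 2 ^ (n+1) * (Real.sin θ + Real.cos θ)) / 2) * h2
    · rw [show n + 1 + 1 = n + 2 from rfl,
        pascal_sum (fun j => (-1:ℝ)^((j+1).choose 2)) n]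
      simp only [eps_period]
      have hneg : ∑ j ∈ Finset.range (n+1), (n.choose j : ℝ) * -(-1:ℝ)^((j).choose 2)
          = -∑ j ∈ Finset.range (n+1), (n.choose j : ℝ) * (-1:ℝ)^((j).choose 2) := by
        rw [← Finset.sum_neg_distrib]
        exact Finset.sum_congr rfl (fun _ _ => by ring)
      rw [hneg, hS, hT, hang, Real.cos_add, Real.sin_pi_div_four, Real.cos_pi_div_four]
      rw [pow_succ (Real.sqrt 2) (n+1)]
      linear_combination (-(Real.sqrt 2 ^ (n+1) * (Real.cos θ - Real.sin θ)) / 2) * h2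

theorem stmt_17 (n : ℕ) :
    ((∑ j ∈ Finset.range (n + 1), (n.choose j : ℤ) * (-1 : ℤ) ^ (j.choose 2)) : ℝ)
      = (Real.sqrt 2) ^ (n + 1) * Real.sin ((n + 1) * Real.pi / 4) := by
  push_cast
  exact (aux17 n).1
end

section
/- For every integer m ≥ 1 and every integer n with 0 ≤ n ≤ 2m − 1, one has ∑_{j=1}^{m} U_n(cos((2j−1)π/(4m))) · cos^n((2j−1)π/(4m)) = m, where U_n is the n-th Chebyshev polynomial of the second kind. -/
open Real Polynomial

/-!
Write `θⱼ = (2j - 1)π/(4m)`. The identity `X · U_{k+1} = U_k + T_{k+2}` gives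
`U_{n+1}(cos θ) cos^{n+1} θ = U_n(cos θ) cos^n θ + cos((n+2)θ) cos^n θ`, so by induction on `n`
it suffices that `∑ⱼ cos((n+2)θⱼ) cos^n θⱼ = 0`. Expanding by product-to-sum, this is a
combination of the sums `∑ⱼ cos(2lθⱼ)` with `1 ≤ l ≤ n + 1 < 2m`, which vanish by Gauss–Chebyshev
quadrature at the zeros `cos 2θⱼ` of `T_m` (`sumZeroes_T_of_not_dvd`).
-/

namespace Polynomial.Chebyshev

open Finset

theorem eval_U_add_one_mul_pow {R : Type*} [CommRing R] (n : ℕ) (x : R) :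
    (U R ((n : ℤ) + 1)).eval x * x ^ (n + 1)
      = (U R n).eval x * x ^ n + (T R ((n : ℤ) + 2)).eval x * x ^ n := by
  rw [T_eq_X_mul_U_sub_U, eval_sub, eval_mul, eval_X]
  ring

theorem sum_cos_two_mul_node_eq_zero {m : ℕ} {l : ℤ} (hl : ¬ (2 * m : ℤ) ∣ l) :
    ∑ j ∈ Icc 1 m, cos (2 * l * ((2 * j - 1) * π / (4 * m))) = 0 := by
  rcases eq_or_ne m 0 with rfl | hm
  · simp
  have h := sumZeroes_T_of_not_dvd hl
  rw [sumZeroes, mul_eq_zero_iff_left (by positivity)] at h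
  rw [← h, ← Ico_add_one_right_eq_Icc, sum_Ico_eq_sum_range, Nat.add_sub_cancel]
  refine sum_congr rfl fun i _ => ?_
  rw [T_real_cos]
  congr 1
  push_cast
  field_simp
  ring

/-- The frequencies `b + 2l ± 2i` (`0 ≤ i ≤ b`) produced by expanding `cos((b + 2l)θ) cos^b θ`
are the even numbers from `2l` to `2(l + b)`, none of which is a multiple of `4m`. -/
theorem sum_cos_mul_node_mul_cos_pow_eq_zero {m : ℕ} (b : ℕ) {l : ℤ} (hl₀ : 0 < l)
    (hl : l + b < 2 * m) :
    ∑ j ∈ Icc 1 m, cos ((b + 2 * l) * ((2 * j - 1) * π / (4 * m))) *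
      cos ((2 * j - 1) * π / (4 * m)) ^ b = 0 := by
  induction b generalizing l with
  | zero =>
    have hl' : ¬ (2 * m : ℤ) ∣ l := fun h => (Int.le_of_dvd hl₀ h).not_gt (by simpa using hl)
    simpa using sum_cos_two_mul_node_eq_zero hl'
  | succ b ih =>
    push_cast at hl
    have product_to_sum (θ : ℝ) :
        cos ((↑(b + 1 : ℕ) + 2 * l) * θ) * cos θ ^ (b + 1) =
          (cos ((b + 2 * ↑(l + 1)) * θ) * cos θ ^ b + cos ((b + 2 * l) * θ) * cos θ ^ b) / 2 := by
      have h := cos_add_cos ((b + 2 * (l + 1) : ℝ) * θ) ((b + 2 * l) * θ)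
      rw [show ((b + 2 * (l + 1) : ℝ) * θ + (b + 2 * l) * θ) / 2 = (b + 1 + 2 * l) * θ by ring,
        show ((b + 2 * (l + 1) : ℝ) * θ - (b + 2 * l) * θ) / 2 = θ by ring] at h
      push_cast
      linear_combination -(cos θ ^ b / 2) * h
    simp_rw [product_to_sum, ← sum_div, sum_add_distrib]
    rw [ih (by omega) (by omega), ih hl₀ (by omega)]
    norm_num

end Polynomial.Chebyshev

theorem stmt_18_general (m : ℕ) (n : ℕ) (hn : n ≤ 2 * m - 1) :
    ∑ j ∈ Finset.Icc 1 m,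
        (Polynomial.Chebyshev.U ℝ (n : ℤ)).eval
            (Real.cos ((2 * j - 1) * Real.pi / (4 * m))) *
          (Real.cos ((2 * j - 1) * Real.pi / (4 * m))) ^ n
      = m := by
  induction n with
  | zero => simp
  | succ n ih =>
    have h_T : ∑ j ∈ Finset.Icc 1 m,
        (Chebyshev.T ℝ ((n : ℤ) + 2)).eval (cos ((2 * j - 1) * π / (4 * m))) *
          cos ((2 * j - 1) * π / (4 * m)) ^ n = 0 := by
      simp only [Chebyshev.T_real_cos, Int.cast_add, Int.cast_natCast, Int.cast_ofNat]
      simpa using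
        Chebyshev.sum_cos_mul_node_mul_cos_pow_eq_zero (m := m) n (l := 1) one_pos (by omega)
    push_cast
    simp_rw [Chebyshev.eval_U_add_one_mul_pow, Finset.sum_add_distrib, ih (by omega), h_T,
      add_zero]

theorem stmt_18 (m : ℕ) (hm : 1 ≤ m) (n : ℕ) (hn : n ≤ 2 * m - 1) :
    ∑ j ∈ Finset.Icc 1 m,
        (Polynomial.Chebyshev.U ℝ (n : ℤ)).eval
            (Real.cos ((2 * j - 1) * Real.pi / (4 * m))) *
          (Real.cos ((2 * j - 1) * Real.pi / (4 * m))) ^ n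
      = m :=
  stmt_18_general m n hn
end

section
/- Let p be an odd prime and let n be a positive multiple of p with n = sp, p ∤ s. Then for 1 ≤ k ≤ p − 1, C(n,k) ≡ sp·(−1)^{k−1}/k (mod p²), where 1/k denotes the inverse of k modulo p². Consequently, if d ≤ p−1 and ∑_{k=1}^{d} (−1)^{k−1}/k ≢ 0 (mod p) and 2^n ≡ 1 (mod p²), then p divides ∑_{k=0}^{n−d−1} C(n,k) = 2^n − 1 − ∑_{k=1}^{d} C(n,k) but p² does not. -/
/-!
From `k * C(n, k) = n * C(n - 1, k - 1)` everything reduces to `C(n - 1, j) ≡ (-1)^j (mod p)` for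
`j < p` when `p ∣ n`: by Pascal's rule `C(n - 1, j) + C(n - 1, j + 1) = C(n, j + 1)`, and the right
side vanishes mod `p` because `(j + 1) * C(n, j + 1)` is a multiple of `n`. Multiplying this
congruence by `n ≡ 0 (mod p)` upgrades it to one mod `p²`. Summing, the tail
`∑_{k < n - d} C(n, k) = 2^n - ∑_{k ≤ d} C(n, k)` is `≡ -s * p * H (mod p²)`, where
`H = ∑_{k=1}^{d} (-1)^(k-1) / k` and `2^n ≡ 1`; so `p` divides it exactly once as soon as `p ∤ s * H`.
-/

open Finset

namespace ZMod

def altHarmonicSum (m d : ℕ) : ZMod m :=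
  ∑ k ∈ Icc 1 d, (-1) ^ (k - 1) * (k : ZMod m)⁻¹

theorem castHom_natCast_inv {m n : ℕ} (hmn : m ∣ n) {k : ℕ} (hk : k.Coprime n) :
    castHom hmn (ZMod m) (k : ZMod n)⁻¹ = (k : ZMod m)⁻¹ := by
  have h := congrArg (castHom hmn (ZMod m)) (coe_mul_inv_eq_one k hk)
  rw [map_mul, map_natCast, map_one] at h
  exact (ZMod.inv_eq_of_mul_eq_one m _ _ h).symm

theorem castHom_altHarmonicSum {m n d : ℕ} (hmn : m ∣ n) (hd : ∀ k ∈ Icc 1 d, k.Coprime n) :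
    castHom hmn (ZMod m) (altHarmonicSum n d) = altHarmonicSum m d := by
  simp only [altHarmonicSum, map_sum, map_mul, map_pow, map_neg, map_one]
  exact sum_congr rfl fun k hk => by rw [castHom_natCast_inv hmn (hd k hk)]

theorem natCast_mul_eq_zero_iff_castHom_eq_zero {p : ℕ} [NeZero p] (x : ZMod (p ^ 2)) :
    (p : ZMod (p ^ 2)) * x = 0 ↔ castHom (dvd_pow_self p two_ne_zero) (ZMod p) x = 0 := by
  rw [← natCast_zmod_val x, ← Nat.cast_mul, map_natCast, natCast_eq_zero_iff,
    natCast_eq_zero_iff]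
  nth_rw 1 [sq]
  exact Nat.mul_dvd_mul_iff_left (NeZero.pos p)

theorem dvd_and_not_sq_dvd_of_intCast_eq {p : ℕ} [NeZero p] {t : ℤ} {y : ZMod (p ^ 2)}
    (ht : (t : ZMod (p ^ 2)) = (p : ZMod (p ^ 2)) * y)
    (hy : castHom (dvd_pow_self p two_ne_zero) (ZMod p) y ≠ 0) :
    (p : ℤ) ∣ t ∧ ¬ (p : ℤ) ^ 2 ∣ t := by
  constructor
  · rw [← intCast_zmod_eq_zero_iff_dvd,
      ← map_intCast (castHom (dvd_pow_self p two_ne_zero) (ZMod p)), ht, map_mul, map_natCast,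
      natCast_self, zero_mul]
  · intro hsq
    have ht0 : (t : ZMod (p ^ 2)) = 0 := by
      rw [intCast_zmod_eq_zero_iff_dvd]; exact_mod_cast hsq
    exact hy ((natCast_mul_eq_zero_iff_castHom_eq_zero y).mp (ht ▸ ht0))

end ZMod

namespace Nat

theorem Prime.dvd_choose_of_dvd {p n k : ℕ} (hp : p.Prime) (hpn : p ∣ n) (hk0 : k ≠ 0)
    (hkp : k < p) : p ∣ n.choose k := by
  obtain ⟨j, rfl⟩ := exists_eq_succ_of_ne_zero hk0
  cases n with
  | zero => simp
  | succ m =>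
    have hmul : p ∣ (m + 1).choose (j + 1) * (j + 1) :=
      add_one_mul_choose_eq m j ▸ dvd_mul_of_dvd_left hpn _
    exact (coprime_of_lt_prime hk0 hkp hp).dvd_of_dvd_mul_right hmul

theorem Prime.choose_modEq_neg_one_pow {p m j : ℕ} (hp : p.Prime) (hpm : p ∣ m + 1)
    (hjp : j < p) : (m.choose j : ℤ) ≡ (-1) ^ j [ZMOD p] := by
  induction j with
  | zero => simp [Int.ModEq.refl]
  | succ j ih =>
    have hdvd : (p : ℤ) ∣ ((m + 1).choose (j + 1) : ℤ) :=
      Int.natCast_dvd_natCast.mpr (hp.dvd_choose_of_dvd hpm j.succ_ne_zero hjp)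
    have hpascal : (m.choose (j + 1) : ℤ) = ((m + 1).choose (j + 1) : ℤ) - m.choose j := by
      rw [choose_succ_succ]; push_cast; ring
    rw [hpascal, pow_succ, mul_neg_one, ← zero_sub]
    exact (Int.modEq_zero_iff_dvd.mpr hdvd).sub (ih (lt_of_succ_lt hjp))

theorem Prime.choose_mul_modEq_sq {p n k : ℕ} (hp : p.Prime) (hpn : p ∣ n) (hk0 : k ≠ 0)
    (hkp : k < p) : (n.choose k * k : ℤ) ≡ n * (-1) ^ (k - 1) [ZMOD p ^ 2] := by
  obtain ⟨j, rfl⟩ := exists_eq_succ_of_ne_zero hk0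
  cases n with
  | zero => simp [Int.ModEq.refl]
  | succ m =>
    have hsucc : ((m + 1).choose (j + 1) * (j + 1) : ℤ) = (m + 1) * m.choose j := by
      exact_mod_cast (add_one_mul_choose_eq m j).symm
    push_cast
    rw [hsucc]
    refine ((hp.choose_modEq_neg_one_pow hpn (lt_of_succ_lt hkp)).mul_left' (c := m + 1)).of_dvd ?_
    rw [sq]
    exact mul_dvd_mul_right (by exact_mod_cast hpn) _

theorem Prime.choose_eq_mul_neg_one_pow_mul_inv {p n k : ℕ} (hp : p.Prime) (hpn : p ∣ n)
    (hk0 : k ≠ 0) (hkp : k < p) :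
    (n.choose k : ZMod (p ^ 2)) = n * (-1) ^ (k - 1) * (k : ZMod (p ^ 2))⁻¹ := by
  have hcop : k.Coprime (p ^ 2) := (coprime_of_lt_prime hk0 hkp hp).symm.pow_right 2
  have hmod := (ZMod.intCast_eq_intCast_iff _ _ (p ^ 2)).mpr
    (by exact_mod_cast hp.choose_mul_modEq_sq hpn hk0 hkp)
  push_cast at hmod
  rw [← hmod, mul_assoc, ZMod.coe_mul_inv_eq_one k hcop, mul_one]

theorem sum_range_sub_choose_add_sum_range_succ_choose {n d : ℕ} (hdn : d ≤ n) :
    ∑ k ∈ range (n - d), n.choose k + ∑ k ∈ range (d + 1), n.choose k = 2 ^ n := by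
  have htail :
      ∑ k ∈ range (d + 1), n.choose (n - d + k) = ∑ k ∈ range (d + 1), n.choose k := by
    rw [← sum_range_reflect]
    refine sum_congr rfl fun k hk => ?_
    rw [mem_range] at hk
    rw [← choose_symm (by omega)]
    congr 1
    omega
  rw [← htail, ← sum_range_add, ← sum_range_choose n, show n - d + (d + 1) = n + 1 by omega]

theorem Prime.sum_range_sub_choose_eq {p n d : ℕ} (hp : p.Prime) (hpn : p ∣ n) (hdp : d < p)
    (hdn : d ≤ n) :
    ∑ k ∈ range (n - d), (n.choose k : ZMod (p ^ 2)) =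
      2 ^ n - 1 - (n : ZMod (p ^ 2)) * ZMod.altHarmonicSum (p ^ 2) d := by
  have hhead : ∑ k ∈ range (d + 1), (n.choose k : ZMod (p ^ 2)) =
      1 + (n : ZMod (p ^ 2)) * ZMod.altHarmonicSum (p ^ 2) d := by
    rw [range_eq_Ico, sum_eq_sum_Ico_succ_bot (by omega : 0 < d + 1), zero_add,
      Ico_add_one_right_eq_Icc, ZMod.altHarmonicSum, mul_sum, choose_zero_right, Nat.cast_one]
    refine congrArg (1 + ·) (sum_congr rfl fun k hk => ?_)
    rw [mem_Icc] at hk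
    rw [hp.choose_eq_mul_neg_one_pow_mul_inv hpn (by omega) (by omega), mul_assoc]
  have hsum := congrArg (Nat.cast : ℕ → ZMod (p ^ 2))
    (sum_range_sub_choose_add_sum_range_succ_choose hdn)
  push_cast at hsum
  rw [hhead] at hsum
  linear_combination hsum

end Nat

theorem stmt_19_general (p : ℕ) (hp : p.Prime) (s n : ℕ)
    (hps : ¬ p ∣ s) (hn : n = s * p) :
    (∀ k : ℕ, 1 ≤ k → k ≤ p - 1 →
      ((n.choose k : ZMod (p ^ 2))
        = (s : ZMod (p ^ 2)) * (p : ZMod (p ^ 2)) * (-1) ^ (k - 1) * (k : ZMod (p ^ 2))⁻¹)) ∧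
    (∀ d : ℕ, 1 ≤ d → d ≤ p - 1 →
      (∑ k ∈ Finset.Icc 1 d, (-1 : ZMod p) ^ (k - 1) * (k : ZMod p)⁻¹) ≠ 0 →
      (2 : ZMod (p ^ 2)) ^ n = 1 →
      ((p : ℤ) ∣ ∑ k ∈ Finset.range (n - d), (n.choose k : ℤ) ∧
        ¬ ((p : ℤ) ^ 2 ∣ ∑ k ∈ Finset.range (n - d), (n.choose k : ℤ)))) := by
  subst hn
  have : Fact p.Prime := ⟨hp⟩
  refine ⟨fun k hk1 hkp => ?_, fun d hd1 hdp hV h2 => ?_⟩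
  · rw [hp.choose_eq_mul_neg_one_pow_mul_inv (dvd_mul_left p s) (by omega) (by omega)]
    push_cast; rfl
  have hs0 : s ≠ 0 := by rintro rfl; exact hps (dvd_zero p)
  have hdn : d ≤ s * p :=
    (by omega : d ≤ p).trans (Nat.le_mul_of_pos_left p (Nat.pos_of_ne_zero hs0))
  refine ZMod.dvd_and_not_sq_dvd_of_intCast_eq
    (y := -((s : ZMod (p ^ 2)) * ZMod.altHarmonicSum (p ^ 2) d)) ?_ ?_
  · push_cast
    rw [hp.sum_range_sub_choose_eq (dvd_mul_left p s) (by omega) hdn, h2]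
    push_cast; ring
  · have hcop (k : ℕ) (hk : k ∈ Icc 1 d) : k.Coprime (p ^ 2) := by
      rw [mem_Icc] at hk
      exact (Nat.coprime_of_lt_prime (by omega) (by omega) hp).symm.pow_right 2
    rw [map_neg, map_mul, map_natCast, ZMod.castHom_altHarmonicSum _ hcop, neg_ne_zero]
    exact mul_ne_zero (by rwa [Ne, ZMod.natCast_eq_zero_iff]) hV

theorem stmt_19 (p : ℕ) (hp : p.Prime) (hpodd : Odd p) (s n : ℕ)
    (hs : 0 < s) (hps : ¬ p ∣ s) (hn : n = s * p) :
    (∀ k : ℕ, 1 ≤ k → k ≤ p - 1 →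
      ((n.choose k : ZMod (p ^ 2))
        = (s : ZMod (p ^ 2)) * (p : ZMod (p ^ 2)) * (-1) ^ (k - 1) * (k : ZMod (p ^ 2))⁻¹)) ∧
    (∀ d : ℕ, 1 ≤ d → d ≤ p - 1 →
      (∑ k ∈ Finset.Icc 1 d, (-1 : ZMod p) ^ (k - 1) * (k : ZMod p)⁻¹) ≠ 0 →
      (2 : ZMod (p ^ 2)) ^ n = 1 →
      ((p : ℤ) ∣ ∑ k ∈ Finset.range (n - d), (n.choose k : ℤ) ∧
        ¬ ((p : ℤ) ^ 2 ∣ ∑ k ∈ Finset.range (n - d), (n.choose k : ℤ)))) :=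
  stmt_19_general p hp s n hps hn
end
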